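/- Inductive doubling estimate for the comparison integral equation: Fix L₂ < L₃, c > 0, and τ₀ > 0, set Δ = L₃ − L₂, and assume Δ > 8, c·e^{Δ/4}·τ₀²/8 ≥ 16, and c·τ₀² ≥ 1. Let f be a solution of the integral equation on [L₂,L₃]×[0,τ₀). Then (f is nondecreasing in t with f ≥ 1/2 and) for every integer n ≥ 1 and every z ∈ [L₃ − Δ·2^{−n}, L₃]: f(z, τ₀(1 − 2^{−n})) ≥ (n+1)·2^{n+2}. -/

import Mathlib

open MeasureTheory

/-- `f` is a solution of the comparison integral equation
`f(z,t) = 1/2 + c·∫₀ᵗ∫₀ˢ exp(∫_{L₂}^z f(y,r) dy) dr ds` on `[L₂,L₃] × S`. -/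
def IsSolIntEq (L₂ L₃ c : ℝ) (S : Set ℝ) (f : ℝ → ℝ → ℝ) : Prop :=
  ContinuousOn (fun p : ℝ × ℝ => f p.1 p.2) (Set.Icc L₂ L₃ ×ˢ S) ∧
  ∀ z ∈ Set.Icc L₂ L₃, ∀ t ∈ S,
    f z t = 1 / 2 + c * ∫ s in (0:ℝ)..t, ∫ r in (0:ℝ)..s, Real.exp (∫ y in L₂..z, f y r)

/-!
Write `f(z,t) = 1/2 + c·F(t)`, where `F` is the iterated integral of the positive function
`r ↦ exp (∫_{L₂}^z f(y,r) dy)`. Hence `f` is nondecreasing in `t` and `f ≥ f(·,0) = 1/2`, and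
if the inner integral is at least `B` for `r ∈ [t,t']`, then `f(z,t') ≥ f(z,t) + c·e^B·(t'-t)²/2`.

Induction on `n`: the bound `f ≥ aₙ = (n+1)·2^{n+2}` on the window `[L₃ - Δ·2⁻ⁿ, L₃]` at time
`τ₀(1 - 2⁻ⁿ)` persists by monotonicity up to time `τ₀(1 - 2⁻ⁿ⁻¹)`. On the halved window the
inner integral is then at least `aₙ·Δ·2⁻ⁿ⁻¹ = 2(n+1)Δ ≥ 16(n+1)`, and the resulting gain
`c·τ₀²·e^{16(n+1)}·2^{-2n-3}` dominates `aₙ₊₁`. The base case uses `f ≥ 1/2` on all of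
`[L₂, L₃]`.
-/

open Set Real intervalIntegral

theorem continuousOn_intervalIntegral_of_continuousOn_Icc_prod {E : Type*}
    [NormedAddCommGroup E] [NormedSpace ℝ E] {f : ℝ → ℝ → E} {a b c d : ℝ}
    (hab : a ≤ b) (hcd : c ≤ d)
    (hf : ContinuousOn (fun p : ℝ × ℝ => f p.1 p.2) (Icc a b ×ˢ Icc c d)) :
    ContinuousOn (fun r => ∫ y in a..b, f y r) (Icc c d) := by
  -- clamping both variables extends `f` continuously from the rectangle to the plane
  let g : ℝ → ℝ → E := fun r y => f (projIcc a b hab y) (projIcc c d hcd r)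
  have hg : Continuous (Function.uncurry g) :=
    hf.comp_continuous (by fun_prop : Continuous fun p : ℝ × ℝ =>
      ((projIcc a b hab p.2 : ℝ), (projIcc c d hcd p.1 : ℝ)))
      fun p => ⟨(projIcc a b hab p.2).2, (projIcc c d hcd p.1).2⟩
  refine (continuous_parametric_intervalIntegral_of_continuous' hg a b).continuousOn.congr
    fun r hr => integral_congr fun y hy => ?_
  rw [uIcc_of_le hab] at hy
  simp [g, projIcc_of_mem _ hy, projIcc_of_mem _ hr]

theorem mul_sub_le_intervalIntegral {g : ℝ → ℝ} {a w b A : ℝ} (hg : ContinuousOn g (Icc a b))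
    (haw : a ≤ w) (hwb : w ≤ b) (hg0 : ∀ y ∈ Icc a w, 0 ≤ g y) (hA : ∀ y ∈ Icc w b, A ≤ g y) :
    A * (b - w) ≤ ∫ y in a..b, g y := by
  have hint : ∀ u v, u ∈ Icc a b → v ∈ Icc a b → IntervalIntegrable g volume u v :=
    fun u v hu hv => (hg.mono (uIcc_subset_Icc hu hv)).intervalIntegrable
  have hw : w ∈ Icc a b := ⟨haw, hwb⟩
  have ha : a ∈ Icc a b := ⟨le_rfl, haw.trans hwb⟩
  have hb : b ∈ Icc a b := ⟨haw.trans hwb, le_rfl⟩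
  rw [← integral_add_adjacent_intervals (hint a w ha hw) (hint w b hw hb)]
  have h₁ : 0 ≤ ∫ y in a..w, g y := integral_nonneg haw hg0
  have h₂ : ∫ _ in w..b, A ≤ ∫ y in w..b, g y :=
    integral_mono_on hwb intervalIntegrable_const (hint w b hw hb) hA
  rw [intervalIntegral.integral_const, smul_eq_mul] at h₂
  linarith

theorem add_mul_sq_div_two_le_integral_integral {g : ℝ → ℝ} {t₁ t₂ m : ℝ}
    (hg : ContinuousOn g (Icc 0 t₂)) (ht₁ : 0 ≤ t₁) (ht : t₁ ≤ t₂)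
    (hg0 : ∀ r ∈ Icc 0 t₁, 0 ≤ g r) (hm : ∀ r ∈ Icc t₁ t₂, m ≤ g r) :
    (∫ s in 0..t₁, ∫ r in 0..s, g r) + m * (t₂ - t₁) ^ 2 / 2 ≤
      ∫ s in 0..t₂, ∫ r in 0..s, g r := by
  have hG : ContinuousOn (fun s => ∫ r in 0..s, g r) (Icc 0 t₂) := by
    have := continuousOn_primitive_interval (μ := volume) (a := 0) (b := t₂) (f := g)
      (by rw [uIcc_of_le (ht₁.trans ht)]; exact hg.integrableOn_Icc)
    rwa [uIcc_of_le (ht₁.trans ht)] at this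
  have hGlow : ∀ s ∈ Icc t₁ t₂, m * (s - t₁) ≤ ∫ r in 0..s, g r := by
    intro s hs
    have := mul_sub_le_intervalIntegral (hg.mono (Icc_subset_Icc_right hs.2)) ht₁ hs.1
      hg0 fun r hr => hm r ⟨hr.1, hr.2.trans hs.2⟩
    linarith
  have hGint : ∀ u v, u ∈ Icc 0 t₂ → v ∈ Icc 0 t₂ →
      IntervalIntegrable (fun s => ∫ r in 0..s, g r) volume u v :=
    fun u v hu hv => (hG.mono (uIcc_subset_Icc hu hv)).intervalIntegrable
  have hmid : t₁ ∈ Icc 0 t₂ := ⟨ht₁, ht⟩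
  have hend : t₂ ∈ Icc 0 t₂ := ⟨ht₁.trans ht, le_rfl⟩
  rw [← integral_add_adjacent_intervals (hGint 0 t₁ ⟨le_rfl, ht₁.trans ht⟩ hmid)
    (hGint t₁ t₂ hmid hend)]
  have hlin : ∫ s in t₁..t₂, m * (s - t₁) = m * (t₂ - t₁) ^ 2 / 2 := by
    rw [integral_comp_sub_right (fun s => m * s), intervalIntegral.integral_const_mul, integral_id]
    ring
  have := integral_mono_on ht (Continuous.intervalIntegrable (by fun_prop) _ _)
    (hGint t₁ t₂ hmid hend) hGlow
  linarith

theorem add_two_mul_two_pow_le_exp (n : ℕ) :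
    ((n : ℝ) + 2) * 2 ^ (3 * n + 6) ≤ exp (16 * (n + 1)) := by
  have h2 : (2 : ℝ) ^ (3 * n + 6) ≤ exp (3 * n + 6) := by
    calc (2 : ℝ) ^ (3 * n + 6) ≤ exp 1 ^ (3 * n + 6) :=
          pow_le_pow_left₀ (by norm_num) (by linarith [add_one_le_exp (1 : ℝ)]) _
      _ = exp (3 * n + 6) := by rw [← exp_nat_mul]; push_cast; ring_nf
  calc ((n : ℝ) + 2) * 2 ^ (3 * n + 6) ≤ exp (n + 1) * exp (3 * n + 6) :=
        mul_le_mul (by linarith [add_one_le_exp ((n : ℝ) + 1)]) h2 (by positivity)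
          (exp_pos _).le
    _ = exp (4 * n + 7) := by rw [← exp_add]; ring_nf
    _ ≤ exp (16 * (n + 1)) := exp_le_exp.2 (by linarith [(Nat.cast_nonneg n : (0 : ℝ) ≤ n)])

theorem add_two_mul_two_pow_le_mul_exp {c τ₀ Δ d : ℝ} (n : ℕ) (hΔ : 8 < Δ)
    (hcτ : 1 ≤ c * τ₀ ^ 2) (hd : Δ / 2 ^ (n + 1) ≤ d) :
    ((n : ℝ) + 2) * 2 ^ (n + 3) ≤
      c * (exp (((n : ℝ) + 1) * 2 ^ (n + 2) * d) * (τ₀ / 2 ^ (n + 1)) ^ 2 / 2) := by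
  set a : ℝ := ((n : ℝ) + 1) * 2 ^ (n + 2)
  have hexponent : 16 * ((n : ℝ) + 1) ≤ a * d := by
    have : a * (Δ / 2 ^ (n + 1)) = 2 * (n + 1) * Δ := by
      simp only [a, pow_succ]; field_simp
    nlinarith [mul_le_mul_of_nonneg_left hd (by positivity : 0 ≤ a)]
  have h4 : (0 : ℝ) < 2 ^ (2 * n + 3) := by positivity
  calc ((n : ℝ) + 2) * 2 ^ (n + 3) = ((n : ℝ) + 2) * 2 ^ (3 * n + 6) / 2 ^ (2 * n + 3) := by
        rw [eq_div_iff h4.ne']; ring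
    _ ≤ exp (a * d) / 2 ^ (2 * n + 3) := by
        gcongr; exact (add_two_mul_two_pow_le_exp n).trans (exp_le_exp.2 hexponent)
    _ ≤ c * τ₀ ^ 2 * exp (a * d) / 2 ^ (2 * n + 3) := by
        gcongr; nlinarith [exp_pos (a * d)]
    _ = c * (exp (a * d) * (τ₀ / 2 ^ (n + 1)) ^ 2 / 2) := by
        field_simp; ring

theorem mul_one_sub_one_div_two_pow_mem_Ico {τ₀ : ℝ} (hτ₀ : 0 < τ₀) (n : ℕ) :
    τ₀ * (1 - 1 / 2 ^ n) ∈ Ico 0 τ₀ := by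
  have h2n : (0 : ℝ) < 1 / 2 ^ n := by positivity
  have h1 : 1 / (2 : ℝ) ^ n ≤ 1 := div_le_one_of_le₀ (one_le_pow₀ (by norm_num)) (by positivity)
  constructor <;> nlinarith

namespace IsSolIntEq

variable {L₂ L₃ c τ₀ : ℝ} {f : ℝ → ℝ → ℝ}

theorem continuousOn_slice (hf : IsSolIntEq L₂ L₃ c (Ico 0 τ₀) f) {r : ℝ}
    (hr : r ∈ Ico 0 τ₀) : ContinuousOn (fun y => f y r) (Icc L₂ L₃) :=
  hf.1.comp (by fun_prop) fun _ hy => mk_mem_prod hy hr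

theorem continuousOn_exp_integral (hf : IsSolIntEq L₂ L₃ c (Ico 0 τ₀) f) {z T : ℝ}
    (hz : z ∈ Icc L₂ L₃) (hT : T ∈ Ico 0 τ₀) :
    ContinuousOn (fun r => exp (∫ y in L₂..z, f y r)) (Icc 0 T) :=
  (continuousOn_intervalIntegral_of_continuousOn_Icc_prod hz.1 hT.1
    (hf.1.mono (prod_mono (Icc_subset_Icc_right hz.2) (Icc_subset_Ico_right hT.2)))).rexp

theorem add_mul_sq_div_two_le (hf : IsSolIntEq L₂ L₃ c (Ico 0 τ₀) f) (hc : 0 ≤ c) {z t t' m : ℝ}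
    (hz : z ∈ Icc L₂ L₃) (ht : 0 ≤ t) (htt' : t ≤ t') (ht' : t' < τ₀)
    (hm : ∀ r ∈ Icc t t', m ≤ exp (∫ y in L₂..z, f y r)) :
    f z t + c * (m * (t' - t) ^ 2 / 2) ≤ f z t' := by
  have hmain := add_mul_sq_div_two_le_integral_integral
    (hf.continuousOn_exp_integral hz ⟨ht.trans htt', ht'⟩) ht htt'
    (fun r _ => (exp_pos _).le) hm
  rw [hf.2 z hz t ⟨ht, htt'.trans_lt ht'⟩, hf.2 z hz t' ⟨ht.trans htt', ht'⟩]
  linarith [mul_le_mul_of_nonneg_left hmain hc]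

theorem monotoneOn (hf : IsSolIntEq L₂ L₃ c (Ico 0 τ₀) f) (hc : 0 ≤ c) {z : ℝ}
    (hz : z ∈ Icc L₂ L₃) : MonotoneOn (fun t => f z t) (Ico 0 τ₀) := by
  intro t ht t' ht' htt'
  have := hf.add_mul_sq_div_two_le hc hz ht.1 htt' ht'.2 (m := 0) fun r _ => (exp_pos _).le
  simpa using this

theorem half_le (hf : IsSolIntEq L₂ L₃ c (Ico 0 τ₀) f) (hc : 0 ≤ c) {z t : ℝ}
    (hz : z ∈ Icc L₂ L₃) (ht : t ∈ Ico 0 τ₀) : 1 / 2 ≤ f z t := by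
  have h0 : (0 : ℝ) ∈ Ico 0 τ₀ := ⟨le_rfl, ht.1.trans_lt ht.2⟩
  have := hf.monotoneOn hc hz h0 ht ht.1
  simpa [hf.2 z hz 0 h0] using this

theorem add_exp_mul_le (hf : IsSolIntEq L₂ L₃ c (Ico 0 τ₀) f) (hc : 0 ≤ c) {w z t t' A : ℝ}
    (hw : L₂ ≤ w) (hwz : w ≤ z) (hz : z ≤ L₃) (ht : 0 ≤ t) (htt' : t ≤ t') (ht' : t' < τ₀)
    (hA : ∀ y ∈ Icc w z, ∀ r ∈ Icc t t', A ≤ f y r) :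
    f z t + c * (exp (A * (z - w)) * (t' - t) ^ 2 / 2) ≤ f z t' := by
  refine hf.add_mul_sq_div_two_le hc ⟨hw.trans hwz, hz⟩ ht htt' ht' fun r hr => ?_
  have hr' : r ∈ Ico 0 τ₀ := ⟨ht.trans hr.1, hr.2.trans_lt ht'⟩
  refine exp_le_exp.2 (mul_sub_le_intervalIntegral
    ((hf.continuousOn_slice hr').mono (Icc_subset_Icc_right hz)) hw hwz
    (fun y hy => ?_) fun y hy => hA y hy r hr)
  exact le_trans (by norm_num) (hf.half_le hc ⟨hy.1, hy.2.trans (hwz.trans hz)⟩ hr')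

theorem doubling_base (hf : IsSolIntEq L₂ L₃ c (Ico 0 τ₀) f) (hc : 0 ≤ c) (hτ₀ : 0 < τ₀)
    (hbase : 16 ≤ c * exp ((L₃ - L₂) / 4) * τ₀ ^ 2 / 8) :
    ∀ z, L₃ - (L₃ - L₂) / 2 ^ 1 ≤ z → z ≤ L₃ →
      (((1 : ℕ) : ℝ) + 1) * 2 ^ (1 + 2) ≤ f z (τ₀ * (1 - 1 / 2 ^ 1)) := by
  intro z hz hzL
  have hτ : τ₀ * (1 - 1 / 2 ^ 1) = τ₀ / 2 := by ring
  have hgrowth := hf.add_exp_mul_le hc le_rfl (by linarith) hzL le_rfl (by positivity)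
    (by linarith) (t' := τ₀ / 2) (A := 1 / 2) fun y hy r hr =>
      hf.half_le hc ⟨hy.1, hy.2.trans hzL⟩ ⟨hr.1, hr.2.trans_lt (by linarith)⟩
  have hexp : exp ((L₃ - L₂) / 4) ≤ exp (1 / 2 * (z - L₂)) := exp_le_exp.2 (by linarith)
  have hf0 : f z 0 = 1 / 2 := by
    simpa using hf.2 z ⟨by linarith, hzL⟩ 0 ⟨le_rfl, hτ₀⟩
  rw [hτ]
  nlinarith [mul_le_mul_of_nonneg_left hexp (by positivity : 0 ≤ c * τ₀ ^ 2)]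

theorem doubling_step (hf : IsSolIntEq L₂ L₃ c (Ico 0 τ₀) f) (hc : 0 ≤ c) (hτ₀ : 0 < τ₀)
    (hΔ : 8 < L₃ - L₂) (hcτ : 1 ≤ c * τ₀ ^ 2) {n : ℕ}
    (hn : ∀ z, L₃ - (L₃ - L₂) / 2 ^ n ≤ z → z ≤ L₃ →
      ((n : ℝ) + 1) * 2 ^ (n + 2) ≤ f z (τ₀ * (1 - 1 / 2 ^ n))) :
    ∀ z, L₃ - (L₃ - L₂) / 2 ^ (n + 1) ≤ z → z ≤ L₃ →
      (((n + 1 : ℕ) : ℝ) + 1) * 2 ^ (n + 1 + 2) ≤ f z (τ₀ * (1 - 1 / 2 ^ (n + 1))) := by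
  intro z hz hzL
  set w := L₃ - (L₃ - L₂) / 2 ^ n
  set t := τ₀ * (1 - 1 / 2 ^ n)
  set t' := τ₀ * (1 - 1 / 2 ^ (n + 1))
  have hwidth : (L₃ - L₂) / 2 ^ (n + 1) ≤ z - w := by
    have : (L₃ - L₂) / 2 ^ n = 2 * ((L₃ - L₂) / 2 ^ (n + 1)) := by
      rw [pow_succ]; field_simp
    linarith
  have hw : L₂ ≤ w := by
    have : (L₃ - L₂) / 2 ^ n ≤ L₃ - L₂ := div_le_self (by linarith) (one_le_pow₀ (by norm_num))
    linarith
  have hwz : w ≤ z := by linarith [(by positivity : 0 ≤ (L₃ - L₂) / 2 ^ (n + 1))]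
  have hgap : t' - t = τ₀ / 2 ^ (n + 1) := by
    simp only [t, t', pow_succ]; field_simp; ring
  have ht : t ∈ Ico 0 τ₀ := mul_one_sub_one_div_two_pow_mem_Ico hτ₀ n
  have ht' : t' ∈ Ico 0 τ₀ := mul_one_sub_one_div_two_pow_mem_Ico hτ₀ (n + 1)
  have htt' : t ≤ t' := by linarith [(by positivity : 0 ≤ τ₀ / 2 ^ (n + 1))]
  have hgrowth := hf.add_exp_mul_le hc hw hwz hzL ht.1 htt' ht'.2 fun y hy r hr =>
    (hn y hy.1 (hy.2.trans hzL)).trans <|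
      hf.monotoneOn hc ⟨hw.trans hy.1, hy.2.trans hzL⟩ ht
        ⟨ht.1.trans hr.1, hr.2.trans_lt ht'.2⟩ hr.1
  have hgain := add_two_mul_two_pow_le_mul_exp n hΔ hcτ hwidth (c := c)
  have hft : 0 ≤ f z t := le_trans (by positivity) (hn z hwz hzL)
  rw [← hgap] at hgain
  push_cast
  linarith

end IsSolIntEq

theorem integral_equation_doubling_general (L₂ L₃ c τ₀ : ℝ) (hc : 0 < c)
    (hτ₀ : 0 < τ₀) (hΔ : 8 < L₃ - L₂)
    (hbase : 16 ≤ c * Real.exp ((L₃ - L₂) / 4) * τ₀ ^ 2 / 8)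
    (hcτ : 1 ≤ c * τ₀ ^ 2)
    (f : ℝ → ℝ → ℝ) (hf : IsSolIntEq L₂ L₃ c (Set.Ico 0 τ₀) f) :
    (∀ z ∈ Set.Icc L₂ L₃,
      MonotoneOn (fun t => f z t) (Set.Ico 0 τ₀) ∧
      ∀ t ∈ Set.Ico (0:ℝ) τ₀, 1 / 2 ≤ f z t) ∧
    (∀ n : ℕ, 1 ≤ n → ∀ z, L₃ - (L₃ - L₂) / 2 ^ n ≤ z → z ≤ L₃ →
      ((n : ℝ) + 1) * 2 ^ (n + 2) ≤ f z (τ₀ * (1 - 1 / 2 ^ n))) := by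
  refine ⟨fun z hz => ⟨hf.monotoneOn hc.le hz, fun t ht => hf.half_le hc.le hz ht⟩, ?_⟩
  intro n hn
  induction n, hn using Nat.le_induction with
  | base => exact hf.doubling_base hc.le hτ₀ hbase
  | succ n _ ih => exact hf.doubling_step hc.le hτ₀ hΔ hcτ ih

/-- **Inductive doubling estimate for the comparison integral equation.** With
`Δ = L₃ − L₂ > 8`, `c·e^{Δ/4}·τ₀²/8 ≥ 16` and `c·τ₀² ≥ 1`, a solution `f` on
`[L₂,L₃] × [0,τ₀)` is nondecreasing in `t`, satisfies `f ≥ 1/2`, and for every `n ≥ 1`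
and `z ∈ [L₃ − Δ·2⁻ⁿ, L₃]`: `f(z, τ₀(1 − 2⁻ⁿ)) ≥ (n+1)·2^{n+2}`. -/
theorem integral_equation_doubling (L₂ L₃ c τ₀ : ℝ) (hL : L₂ < L₃) (hc : 0 < c)
    (hτ₀ : 0 < τ₀) (hΔ : 8 < L₃ - L₂)
    (hbase : 16 ≤ c * Real.exp ((L₃ - L₂) / 4) * τ₀ ^ 2 / 8)
    (hcτ : 1 ≤ c * τ₀ ^ 2)
    (f : ℝ → ℝ → ℝ) (hf : IsSolIntEq L₂ L₃ c (Set.Ico 0 τ₀) f) :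
    (∀ z ∈ Set.Icc L₂ L₃,
      MonotoneOn (fun t => f z t) (Set.Ico 0 τ₀) ∧
      ∀ t ∈ Set.Ico (0:ℝ) τ₀, 1 / 2 ≤ f z t) ∧
    (∀ n : ℕ, 1 ≤ n → ∀ z, L₃ - (L₃ - L₂) / 2 ^ n ≤ z → z ≤ L₃ →
      ((n : ℝ) + 1) * 2 ^ (n + 2) ≤ f z (τ₀ * (1 - 1 / 2 ^ n))) :=
  integral_equation_doubling_general L₂ L₃ c τ₀ hc hτ₀ hΔ hbase hcτ f hf
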